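/- Let G = (V,E,w) be a finite connected weighted simple graph with positive edge weights in which all pairwise shortest-path distances between distinct vertices are at least 1 and at most Λ, let L be the weight of a minimum spanning tree of G, and let α ≥ 1. Suppose that for each integer i with −⌈log₂ α⌉ − 1 ≤ i ≤ ⌈log₂ Λ⌉, the set N_i ⊆ V is an (α·2^i, 2^i)-net of G. Then L ≤ Σ_i |N_i| · α · 2^{i+1}, where the sum ranges over all such i. -/

import Mathlib

/-- The total weight of a walk: the sum of the weights of its edges
(with multiplicity). -/
noncomputable def walkWeight {V : Type*} {G : SimpleGraph V} (w : Sym2 V → ℝ)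
    {u v : V} (p : G.Walk u v) : ℝ :=
  (p.edges.map w).sum

/-- The shortest-path distance in a weighted graph: the infimum of the weights
of walks between the two vertices. -/
noncomputable def gdist {V : Type*} (G : SimpleGraph V) (w : Sym2 V → ℝ) (u v : V) : ℝ :=
  sInf {x : ℝ | ∃ p : G.Walk u v, walkWeight w p = x}

/-- The total weight of a (sub)graph: the sum of the weights of its edges. -/
noncomputable def graphWeight {V : Type*} [Fintype V] (G : SimpleGraph V)
    (w : Sym2 V → ℝ) : ℝ :=
  ∑ e ∈ G.edgeSet.toFinite.toFinset, w e


open SimpleGraph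

section Helpers

variable {V : Type*}

lemma walkWeight_nonneg {G : SimpleGraph V} (w : Sym2 V → ℝ)
    (hw : ∀ e ∈ G.edgeSet, 0 ≤ w e) {u v : V} (p : G.Walk u v) :
    0 ≤ (p.edges.map w).sum := by
  apply List.sum_nonneg
  intro x hx
  obtain ⟨e, he, rfl⟩ := List.mem_map.1 hx
  exact hw e (p.edges_subset_edgeSet he)

lemma sum_toFinset_le [DecidableEq α] (w : α → ℝ) :
    ∀ (l : List α), (∀ e ∈ l, 0 ≤ w e) → ∑ e ∈ l.toFinset, w e ≤ (l.map w).sum := by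
  intro l
  induction l with
  | nil => simp
  | cons a l ih =>
    intro h
    simp only [List.toFinset_cons, List.map_cons, List.sum_cons]
    by_cases ha : a ∈ l.toFinset
    · rw [Finset.insert_eq_self.2 ha]
      have := ih (fun e he => h e (List.mem_cons_of_mem _ he))
      linarith [h a List.mem_cons_self]
    · rw [Finset.sum_insert ha]
      have := ih (fun e he => h e (List.mem_cons_of_mem _ he))
      linarith

lemma sum_biUnion_le' [DecidableEq β] {s : Finset ι} {t : ι → Finset β} {f : β → ℝ}
    (hf : ∀ i ∈ s, ∀ b ∈ t i, 0 ≤ f b) :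
    ∑ b ∈ s.biUnion t, f b ≤ ∑ i ∈ s, ∑ b ∈ t i, f b := by
  classical
  induction s using Finset.induction_on with
  | empty => simp
  | @insert a s ha ih =>
    rw [Finset.biUnion_insert, Finset.sum_insert ha]
    have h1 : ∑ b ∈ t a ∪ s.biUnion t, f b ≤ ∑ b ∈ t a, f b + ∑ b ∈ s.biUnion t, f b := by
      have := Finset.sum_union_inter (s₁ := t a) (s₂ := s.biUnion t) (f := f)
      have hnn : 0 ≤ ∑ b ∈ t a ∩ s.biUnion t, f b := by
        apply Finset.sum_nonneg
        intro b hb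
        exact hf a (Finset.mem_insert_self a s) b (Finset.mem_of_mem_inter_left hb)
      linarith
    refine h1.trans ?_
    have := ih (fun i hi b hb => hf i (Finset.mem_insert_of_mem hi) b hb)
    linarith

lemma fromEdgeSet_le' {G : SimpleGraph V} {s : Set (Sym2 V)} (h : s ⊆ G.edgeSet) :
    SimpleGraph.fromEdgeSet s ≤ G := by
  intro v w hvw
  exact (SimpleGraph.mem_edgeSet (G := G)).1 (h hvw.1)

lemma le_two_zpow_ceil_logb {x : ℝ} (hx : 1 ≤ x) :
    x ≤ (2 : ℝ) ^ (⌈Real.logb 2 x⌉ : ℤ) := by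
  have hx0 : (0 : ℝ) < x := lt_of_lt_of_le one_pos hx
  have h1 : x = (2 : ℝ) ^ (Real.logb 2 x) := by
    rw [Real.rpow_logb (by norm_num) (by norm_num) hx0]
  have h2 : (2 : ℝ) ^ (Real.logb 2 x) ≤ (2 : ℝ) ^ ((⌈Real.logb 2 x⌉ : ℤ) : ℝ) := by
    apply Real.rpow_le_rpow_of_exponent_le (by norm_num)
    exact Int.le_ceil _
  calc x = (2 : ℝ) ^ (Real.logb 2 x) := h1
    _ ≤ (2 : ℝ) ^ ((⌈Real.logb 2 x⌉ : ℤ) : ℝ) := h2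
    _ = (2 : ℝ) ^ (⌈Real.logb 2 x⌉ : ℤ) := by rw [Real.rpow_intCast]

end Helpers


open SimpleGraph

section H2
variable {V : Type*}

lemma gdist_nonneg' {G : SimpleGraph V} {w : Sym2 V → ℝ}
    (hw : ∀ e ∈ G.edgeSet, 0 ≤ w e) (u v : V) : 0 ≤ gdist G w u v := by
  apply Real.sInf_nonneg
  rintro x ⟨p, rfl⟩
  exact walkWeight_nonneg w hw p

lemma exists_walk_lt {G : SimpleGraph V} (w : Sym2 V → ℝ) (hconn : G.Connected)
    (u v : V) {ε : ℝ} (hε : 0 < ε) :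
    ∃ p : G.Walk u v, walkWeight w p < gdist G w u v + ε := by
  have hne : {x : ℝ | ∃ p : G.Walk u v, walkWeight w p = x}.Nonempty := by
    obtain ⟨p⟩ := hconn u v
    exact ⟨walkWeight w p, p, rfl⟩
  obtain ⟨a, ⟨p, rfl⟩, ha⟩ := Real.lt_sInf_add_pos hne hε
  exact ⟨p, ha⟩

/-- Deleting a non-bridge edge preserves reachability. -/
lemma reachable_of_reachable_delete {H : SimpleGraph V} {v w : V}
    (hr : (H \ SimpleGraph.fromEdgeSet {s(v, w)}).Reachable v w) {a b : V}
    (p : H.Walk a b) : (H \ SimpleGraph.fromEdgeSet {s(v, w)}).Reachable a b := by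
  induction p with
  | nil => exact SimpleGraph.Reachable.refl _
  | @cons x y c h q ih =>
    refine Reachable.trans ?_ ih
    by_cases he : s(x, y) = s(v, w)
    · rw [Sym2.eq_iff] at he
      rcases he with ⟨rfl, rfl⟩ | ⟨rfl, rfl⟩
      · exact hr
      · exact hr.symm
    · exact SimpleGraph.Adj.reachable (by
        simp only [SimpleGraph.sdiff_adj, SimpleGraph.fromEdgeSet_adj]
        exact ⟨h, fun hc => he (Set.mem_singleton_iff.1 hc.1)⟩)
end H2

/-- `T` is a minimum spanning tree of `G` w.r.t. the weights `w`. -/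
def IsMST {V : Type*} [Fintype V] (G T : SimpleGraph V) (w : Sym2 V → ℝ) : Prop :=
  T ≤ G ∧ T.IsTree ∧
    ∀ T' : SimpleGraph V, T' ≤ G → T'.IsTree → graphWeight T w ≤ graphWeight T' w

section H3
variable {V : Type*} [Fintype V]

lemma graphWeight_mono {G H : SimpleGraph V} {w : Sym2 V → ℝ}
    (hle : G ≤ H) (hw : ∀ e ∈ H.edgeSet, 0 ≤ w e) :
    graphWeight G w ≤ graphWeight H w := by
  apply Finset.sum_le_sum_of_subset_of_nonneg
  · intro e he
    rw [Set.Finite.mem_toFinset] at he ⊢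
    exact SimpleGraph.edgeSet_mono hle he
  · intro e he _
    rw [Set.Finite.mem_toFinset] at he
    exact hw e he

lemma exists_mst_aux {w : Sym2 V → ℝ} :
    ∀ (n : ℕ) (H : SimpleGraph V), (H.edgeSet.toFinite.toFinset).card = n →
      (∀ e ∈ H.edgeSet, 0 ≤ w e) → H.Connected →
      ∃ T : SimpleGraph V, T ≤ H ∧ T.IsTree ∧ graphWeight T w ≤ graphWeight H w := by
  intro n
  induction n using Nat.strong_induction_on with
  | _ n ih =>
    intro H hcard hw hconn
    by_cases hac : H.IsAcyclic
    · exact ⟨H, le_refl _, ⟨hconn, hac⟩, le_refl _⟩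
    · rw [SimpleGraph.isAcyclic_iff_forall_adj_isBridge] at hac
      push_neg at hac
      obtain ⟨v, u, hadj, hbr⟩ := hac
      rw [SimpleGraph.isBridge_iff] at hbr
      push_neg at hbr
      have hreach : (H \ SimpleGraph.fromEdgeSet {s(v, u)}).Reachable v u := hbr
      set H' := H \ SimpleGraph.fromEdgeSet {s(v, u)} with hH'
      have hle : H' ≤ H := sdiff_le
      have hE' : H'.edgeSet = H.edgeSet \ {s(v, u)} := by
        rw [hH', SimpleGraph.edgeSet_sdiff, SimpleGraph.edgeSet_fromEdgeSet,
          SimpleGraph.edgeSet_sdiff_sdiff_isDiag]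
      have hconn' : H'.Connected := by
        rw [SimpleGraph.connected_iff]
        refine ⟨fun a b => ?_, hconn.nonempty⟩
        obtain ⟨p⟩ := hconn a b
        exact reachable_of_reachable_delete hreach p
      have hsub : H'.edgeSet.toFinite.toFinset ⊂ H.edgeSet.toFinite.toFinset := by
        rw [Set.Finite.toFinset_ssubset_toFinset, hE']
        constructor
        · exact Set.diff_subset
        · intro hs
          have : s(v, u) ∈ H.edgeSet \ {s(v, u)} := hs hadj
          simp at this
      have hlt : (H'.edgeSet.toFinite.toFinset).card < n := by
        rw [← hcard]
        exact Finset.card_lt_card hsub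
      obtain ⟨T, hT1, hT2, hT3⟩ := ih _ hlt H' rfl
        (fun e he => hw e (SimpleGraph.edgeSet_mono hle he)) hconn'
      exact ⟨T, hT1.trans hle, hT2, hT3.trans (graphWeight_mono hle hw)⟩

lemma exists_mst {w : Sym2 V → ℝ} {H : SimpleGraph V}
    (hw : ∀ e ∈ H.edgeSet, 0 ≤ w e) (hconn : H.Connected) :
    ∃ T : SimpleGraph V, T ≤ H ∧ T.IsTree ∧ graphWeight T w ≤ graphWeight H w :=
  exists_mst_aux _ H rfl hw hconn

end H3

/-- the lower-bound half of the MST-weight approximation by net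
cardinalities: if `N_i` is an `(α·2^i, 2^i)`-net of `G` for every integer scale
`i ∈ [-⌈log₂ α⌉ - 1, ⌈log₂ Λ⌉]`, then the MST weight `L` is at most
`Σ_i |N_i|·α·2^{i+1}`. -/
theorem mst_le_net_sum {V : Type*} [Fintype V] (G : SimpleGraph V) (w : Sym2 V → ℝ)
    (hconn : G.Connected) (hpos : ∀ e ∈ G.edgeSet, 0 < w e)
    (Λ : ℝ) (hΛ : ∀ u v : V, u ≠ v → 1 ≤ gdist G w u v ∧ gdist G w u v ≤ Λ)
    (T : SimpleGraph V) (hMST : IsMST G T w) (L : ℝ) (hL : graphWeight T w = L)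
    (α : ℝ) (hα : 1 ≤ α) (N : ℤ → Finset V)
    (hnet : ∀ i ∈ Finset.Icc (-⌈Real.logb 2 α⌉ - 1) ⌈Real.logb 2 Λ⌉,
      (∀ v : V, ∃ x ∈ N i, gdist G w v x ≤ α * (2 : ℝ) ^ i) ∧
      (∀ x ∈ N i, ∀ y ∈ N i, x ≠ y → (2 : ℝ) ^ i < gdist G w x y)) :
    L ≤ ∑ i ∈ Finset.Icc (-⌈Real.logb 2 α⌉ - 1) ⌈Real.logb 2 Λ⌉,
          ((N i).card : ℝ) * α * (2 : ℝ) ^ (i + 1) := by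
  classical
  subst hL
  have hα0 : (0:ℝ) < α := lt_of_lt_of_le one_pos hα
  have hwnn : ∀ e ∈ G.edgeSet, 0 ≤ w e := fun e he => (hpos e he).le
  have htermnn : ∀ i : ℤ, 0 ≤ ((N i).card : ℝ) * α * (2:ℝ) ^ (i+1) := fun i =>
    mul_nonneg (mul_nonneg (Nat.cast_nonneg _) hα0.le) (zpow_pos two_pos _).le
  set i0 : ℤ := -⌈Real.logb 2 α⌉ - 1 with hi0
  set i1 : ℤ := ⌈Real.logb 2 Λ⌉ with hi1
  rcases subsingleton_or_nontrivial V with hV | hV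
  · -- one-vertex case: the tree has no edges
    have hTe : T.edgeSet = ∅ := by
      ext e
      refine Sym2.ind (fun a b => ?_) e
      simp only [SimpleGraph.mem_edgeSet, Set.mem_empty_iff_false, iff_false]
      exact fun h => h.ne (Subsingleton.elim a b)
    have h0 : graphWeight T w = 0 := by
      rw [graphWeight]
      rw [Set.Finite.toFinset_eq_empty.2 hTe, Finset.sum_empty]
    rw [h0]
    exact Finset.sum_nonneg (fun i _ => htermnn i)
  · obtain ⟨u₀, v₀, huv⟩ := exists_pair_ne V
    have hΛ1 : 1 ≤ Λ := le_trans (hΛ u₀ v₀ huv).1 (hΛ u₀ v₀ huv).2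
    have hαc : (0:ℤ) ≤ ⌈Real.logb 2 α⌉ :=
      Int.ceil_nonneg (Real.logb_nonneg one_lt_two hα)
    have hΛc : (0:ℤ) ≤ i1 := by
      rw [hi1]; exact Int.ceil_nonneg (Real.logb_nonneg one_lt_two hΛ1)
    have h01 : i0 ≤ i1 := by omega
    have hcov : ∀ i ∈ Finset.Icc i0 i1, ∀ v : V,
        ∃ x ∈ N i, gdist G w v x ≤ α * (2:ℝ) ^ i := fun i hi => (hnet i hi).1
    have hsep : ∀ i ∈ Finset.Icc i0 i1, ∀ x ∈ N i, ∀ y ∈ N i, x ≠ y →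
        (2:ℝ) ^ i < gdist G w x y := fun i hi => (hnet i hi).2
    have hmem0 : i0 ∈ Finset.Icc i0 i1 := Finset.mem_Icc.2 ⟨le_refl _, h01⟩
    have hmem1 : i1 ∈ Finset.Icc i0 i1 := Finset.mem_Icc.2 ⟨h01, le_refl _⟩
    -- the bottom net contains every vertex
    have hhalf : α * (2:ℝ) ^ i0 < 1 := by
      have h1 : α ≤ (2:ℝ) ^ (⌈Real.logb 2 α⌉ : ℤ) := le_two_zpow_ceil_logb hα
      have hp : (0:ℝ) < (2:ℝ) ^ (⌈Real.logb 2 α⌉ : ℤ) := zpow_pos two_pos _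
      have h2 : (2:ℝ) ^ i0 = ((2:ℝ) ^ (⌈Real.logb 2 α⌉ : ℤ))⁻¹ * 2⁻¹ := by
        rw [hi0, sub_eq_add_neg, zpow_add₀ (two_ne_zero), zpow_neg, zpow_neg, zpow_one]
      have h3 : α / (2:ℝ) ^ (⌈Real.logb 2 α⌉ : ℤ) ≤ 1 := (div_le_one hp).2 h1
      have h4 : α * (2:ℝ) ^ i0 = (α / (2:ℝ) ^ (⌈Real.logb 2 α⌉ : ℤ)) * 2⁻¹ := by
        rw [h2]; ring
      rw [h4]
      nlinarith
    have hN0 : ∀ v : V, v ∈ N i0 := by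
      intro v
      obtain ⟨x, hx, hdx⟩ := hcov i0 hmem0 v
      by_cases hvx : v = x
      · rwa [hvx]
      · have := (hΛ v x hvx).1
        linarith
    -- the top net is a single point z
    obtain ⟨z, hz, -⟩ := hcov i1 hmem1 u₀
    have hΛpow : Λ ≤ (2:ℝ) ^ i1 := by
      rw [hi1]; exact le_two_zpow_ceil_logb hΛ1
    have huniq : ∀ x ∈ N i1, x = z := by
      intro x hx
      by_contra hxz
      have h1 := hsep i1 hmem1 x hx z hz hxz
      have h2 := (hΛ x z hxz).2
      linarith
    set C : ℝ := ∑ i ∈ Finset.Icc i0 (i1-1), ((N i).card : ℝ) with hC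
    have hCnn : 0 ≤ C := Finset.sum_nonneg (fun i _ => Nat.cast_nonneg _)
    have key : ∀ ε : ℝ, 0 < ε → graphWeight T w ≤
        (∑ i ∈ Finset.Icc i0 i1, ((N i).card : ℝ) * α * (2:ℝ) ^ (i+1)) + C * ε := by
      intro ε hε
      have hex : ∀ i ∈ Finset.Icc i0 (i1-1), ∀ x ∈ N i, ∃ F : Finset (Sym2 V),
          (↑F ⊆ G.edgeSet) ∧ (∑ e ∈ F, w e) ≤ α * (2:ℝ) ^ (i+1) + ε ∧
          ∃ y ∈ N (i+1), ∃ p : G.Walk x y, ∀ e ∈ p.edges, e ∈ F := by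
        intro i hi x hx
        rw [Finset.mem_Icc] at hi
        have hi1m : i + 1 ∈ Finset.Icc i0 i1 := Finset.mem_Icc.2 ⟨by omega, by omega⟩
        obtain ⟨y, hy, hdy⟩ := hcov (i+1) hi1m x
        obtain ⟨p, hp⟩ := exists_walk_lt w hconn x y hε
        refine ⟨p.edges.toFinset, ?_, ?_, y, hy, p, fun e he => List.mem_toFinset.2 he⟩
        · intro e he
          rw [Finset.mem_coe, List.mem_toFinset] at he
          exact p.edges_subset_edgeSet he
        · have hs := sum_toFinset_le w p.edges
            (fun e he => hwnn e (p.edges_subset_edgeSet he))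
          have hg := gdist_nonneg' hwnn x y
          rw [walkWeight] at hp
          linarith
      choose! F hF1 hF2 hF3 using hex
      set EF : Finset (Sym2 V) :=
        (Finset.Icc i0 (i1-1)).biUnion (fun i => (N i).biUnion (fun x => F i x)) with hEF
      have hEFG : (↑EF : Set (Sym2 V)) ⊆ G.edgeSet := by
        intro e he
        rw [Finset.mem_coe, hEF, Finset.mem_biUnion] at he
        obtain ⟨i, hi, he⟩ := he
        rw [Finset.mem_biUnion] at he
        obtain ⟨x, hx, he⟩ := he
        exact hF1 i hi x hx (Finset.mem_coe.2 he)
      set H : SimpleGraph V := SimpleGraph.fromEdgeSet ↑EF with hH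
      have hHG : H ≤ G := fromEdgeSet_le' hEFG
      have hHedge : ∀ e ∈ EF, e ∈ H.edgeSet := by
        intro e he
        rw [hH, SimpleGraph.edgeSet_fromEdgeSet]
        exact ⟨Finset.mem_coe.2 he,
          SimpleGraph.not_isDiag_of_mem_edgeSet G (hEFG (Finset.mem_coe.2 he))⟩
      have hreach : ∀ k : ℕ, ∀ i : ℤ, i0 ≤ i → i ≤ i1 → (i1 - i).toNat = k →
          ∀ x ∈ N i, H.Reachable x z := by
        intro k
        induction k with
        | zero =>
          intro i hlo hhi hk x hx
          have hii : i = i1 := by omega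
          subst hii
          rw [huniq x hx]
        | succ k ih =>
          intro i hlo hhi hk x hx
          have hiI : i ∈ Finset.Icc i0 (i1-1) := Finset.mem_Icc.2 ⟨hlo, by omega⟩
          obtain ⟨y, hy, p, hp⟩ := hF3 i hiI x hx
          have hpe : ∀ e ∈ p.edges, e ∈ H.edgeSet := by
            intro e he
            apply hHedge
            rw [hEF, Finset.mem_biUnion]
            exact ⟨i, hiI, Finset.mem_biUnion.2 ⟨x, hx, hp e he⟩⟩
          exact (SimpleGraph.Reachable.trans ⟨p.transfer H hpe⟩
            (ih (i+1) (by omega) (by omega) (by omega) y hy))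
      have hHconn : H.Connected := by
        rw [SimpleGraph.connected_iff]
        refine ⟨fun a b => ?_, ⟨u₀⟩⟩
        exact (hreach (i1 - i0).toNat i0 le_rfl h01 rfl a (hN0 a)).trans
          (hreach (i1 - i0).toNat i0 le_rfl h01 rfl b (hN0 b)).symm
      have hHnn : ∀ e ∈ H.edgeSet, 0 ≤ w e :=
        fun e he => hwnn e (SimpleGraph.edgeSet_mono hHG he)
      have hw1 : graphWeight H w ≤ ∑ e ∈ EF, w e := by
        apply Finset.sum_le_sum_of_subset_of_nonneg
        · intro e he
          rw [Set.Finite.mem_toFinset, hH, SimpleGraph.edgeSet_fromEdgeSet] at he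
          exact Finset.mem_coe.1 he.1
        · intro e he _
          exact hwnn e (hEFG (Finset.mem_coe.2 he))
      have hw2 : ∑ e ∈ EF, w e ≤
          ∑ i ∈ Finset.Icc i0 (i1-1), ∑ x ∈ N i, ∑ e ∈ F i x, w e := by
        rw [hEF]
        refine (sum_biUnion_le' ?_).trans (Finset.sum_le_sum ?_)
        · intro i hi b hb
          rw [Finset.mem_biUnion] at hb
          obtain ⟨x, hx, hb⟩ := hb
          exact hwnn b (hF1 i hi x hx (Finset.mem_coe.2 hb))
        · intro i hi
          exact sum_biUnion_le' (fun x hx e he => hwnn e (hF1 i hi x hx (Finset.mem_coe.2 he)))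
      have hw3 : ∑ i ∈ Finset.Icc i0 (i1-1), ∑ x ∈ N i, ∑ e ∈ F i x, w e ≤
          ∑ i ∈ Finset.Icc i0 (i1-1), ((N i).card : ℝ) * (α * (2:ℝ) ^ (i+1) + ε) := by
        apply Finset.sum_le_sum
        intro i hi
        calc ∑ x ∈ N i, ∑ e ∈ F i x, w e ≤ ∑ _x ∈ N i, (α * (2:ℝ) ^ (i+1) + ε) :=
              Finset.sum_le_sum (fun x hx => hF2 i hi x hx)
          _ = ((N i).card : ℝ) * (α * (2:ℝ) ^ (i+1) + ε) := by
              rw [Finset.sum_const, nsmul_eq_mul]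
      have hsplit : ∑ i ∈ Finset.Icc i0 (i1-1), ((N i).card : ℝ) * (α * (2:ℝ) ^ (i+1) + ε)
          = (∑ i ∈ Finset.Icc i0 (i1-1), ((N i).card : ℝ) * α * (2:ℝ) ^ (i+1)) + C * ε := by
        rw [hC, Finset.sum_mul, ← Finset.sum_add_distrib]
        exact Finset.sum_congr rfl (fun i _ => by ring)
      have hsub : ∑ i ∈ Finset.Icc i0 (i1-1), ((N i).card : ℝ) * α * (2:ℝ) ^ (i+1) ≤
          ∑ i ∈ Finset.Icc i0 i1, ((N i).card : ℝ) * α * (2:ℝ) ^ (i+1) :=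
        Finset.sum_le_sum_of_subset_of_nonneg
          (Finset.Icc_subset_Icc_right (by omega)) (fun i _ _ => htermnn i)
      obtain ⟨T', hT'H, hT'tree, hT'w⟩ := exists_mst hHnn hHconn
      have hLT : graphWeight T w ≤ graphWeight T' w :=
        hMST.2.2 T' (hT'H.trans hHG) hT'tree
      linarith
    refine le_of_forall_pos_le_add (fun δ hδ => ?_)
    have hCp : (0:ℝ) < C + 1 := by linarith
    have hεp : 0 < δ / (C + 1) := div_pos hδ hCp
    have h1 := key (δ / (C + 1)) hεp
    have h2 : C * (δ / (C + 1)) ≤ δ := by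
      rw [mul_div_assoc'] at *
      rw [div_le_iff₀ hCp]
      nlinarith
    linarith
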